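/- Let ρ be a state on ℂ^d and A = (A_1, …, A_m) a POVM with all elements nonzero, with p_j = tr(ρ A_j). Then every eigenvalue of each of G_S(ρ,A), G_L(ρ,A), G_R(ρ,A) lies in the closed interval [0,1], and the vector √p with entries √(p_j) is an eigenvector of each of G_S(ρ,A), G_L(ρ,A), G_R(ρ,A) with eigenvalue 1; in particular each of these matrices has operator norm exactly 1. -/

import Mathlib

open Matrix
open scoped ComplexOrder

def IsPOVM {d m : ℕ} (A : Fin m → Matrix (Fin d) (Fin d) ℂ) : Prop :=
  (∀ j, (A j).PosSemidef) ∧ ∑ j, A j = 1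

/-- The outcome probabilities `p_j = tr(ρ A_j)` (a real number). -/
noncomputable def pvec {d m : ℕ} (ρ : Matrix (Fin d) (Fin d) ℂ)
    (A : Fin m → Matrix (Fin d) (Fin d) ℂ) (j : Fin m) : ℝ :=
  ((ρ * A j).trace).re

/-- The column vector `√p` with entries `√(p_j)`. -/
noncomputable def sqrtp {d m : ℕ} (ρ : Matrix (Fin d) (Fin d) ℂ)
    (A : Fin m → Matrix (Fin d) (Fin d) ℂ) (j : Fin m) : ℂ :=
  (Real.sqrt (pvec ρ A j) : ℂ)

/-- Gram matrix `G_S(ρ,A)`. -/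
noncomputable def GmS {d m : ℕ} (ρ : Matrix (Fin d) (Fin d) ℂ)
    (A : Fin m → Matrix (Fin d) (Fin d) ℂ) : Matrix (Fin m) (Fin m) ℂ :=
  Matrix.of fun j k =>
    ((ρ * (A k * A j)).trace + (ρ * (A j * A k)).trace) /
      (2 * (Real.sqrt (pvec ρ A j * pvec ρ A k) : ℂ))

/-- Gram matrix `G_L(ρ,A)`. -/
noncomputable def GmL {d m : ℕ} (ρ : Matrix (Fin d) (Fin d) ℂ)
    (A : Fin m → Matrix (Fin d) (Fin d) ℂ) : Matrix (Fin m) (Fin m) ℂ :=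
  Matrix.of fun j k =>
    (ρ * (A k * A j)).trace / (Real.sqrt (pvec ρ A j * pvec ρ A k) : ℂ)

/-- Gram matrix `G_R(ρ,A)`. -/
noncomputable def GmR {d m : ℕ} (ρ : Matrix (Fin d) (Fin d) ℂ)
    (A : Fin m → Matrix (Fin d) (Fin d) ℂ) : Matrix (Fin m) (Fin m) ℂ :=
  Matrix.of fun j k =>
    (ρ * (A j * A k)).trace / (Real.sqrt (pvec ρ A j * pvec ρ A k) : ℂ)

noncomputable def emb {d : ℕ} (X : Matrix (Fin d) (Fin d) ℂ) :
    EuclideanSpace ℂ (Fin d × Fin d) :=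
  (WithLp.equiv 2 _).symm (fun p => X p.1 p.2)

lemma trace_emb {d : ℕ} (X Y : Matrix (Fin d) (Fin d) ℂ) :
    (Xᴴ * Y).trace = (inner ℂ (emb X) (emb Y) : ℂ) := by
  simp only [Matrix.trace, Matrix.diag_apply, Matrix.mul_apply, Matrix.conjTranspose_apply,
    emb, PiLp.inner_apply, RCLike.inner_apply, WithLp.equiv_symm_apply, PiLp.toLp_apply,
    Fintype.sum_prod_type]
  rw [Finset.sum_comm]
  exact Finset.sum_congr rfl fun _ _ => Finset.sum_congr rfl fun _ _ => mul_comm _ _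

lemma trace_emb_self {d : ℕ} (X : Matrix (Fin d) (Fin d) ℂ) :
    (Xᴴ * X).trace = ((‖emb X‖ ^ 2 : ℝ) : ℂ) := by
  rw [trace_emb]
  exact_mod_cast inner_self_eq_norm_sq_to_K (𝕜 := ℂ) (emb X)

lemma emb_eq_zero {d : ℕ} {X : Matrix (Fin d) (Fin d) ℂ} (h : emb X = 0) : X = 0 := by
  ext i j
  exact congrArg (fun v : EuclideanSpace ℂ (Fin d × Fin d) => v (i, j)) h

section sqrtport
open scoped MatrixOrder

noncomputable def Matrix.PosSemidef.sqrt {n : Type*} [Fintype n] [DecidableEq n]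
    {M : Matrix n n ℂ} (_hM : M.PosSemidef) : Matrix n n ℂ :=
  CFC.sqrt M

lemma Matrix.PosSemidef.posSemidef_sqrt {n : Type*} [Fintype n] [DecidableEq n]
    {M : Matrix n n ℂ} (hM : M.PosSemidef) : hM.sqrt.PosSemidef :=
  (CFC.sqrt_nonneg M).posSemidef

lemma Matrix.PosSemidef.sqrt_mul_self {n : Type*} [Fintype n] [DecidableEq n]
    {M : Matrix n n ℂ} (hM : M.PosSemidef) : hM.sqrt * hM.sqrt = M :=
  CFC.sqrt_mul_sqrt_self M hM.nonneg

end sqrtport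

section ctx
variable {d m : ℕ} {ρ : Matrix (Fin d) (Fin d) ℂ} {A : Fin m → Matrix (Fin d) (Fin d) ℂ}

lemma trace_rho_emb (hρ : ρ.PosDef) (hA : ∀ j, (A j).PosSemidef) (j : Fin m) :
    (ρ * A j).trace = ((‖emb (hρ.posSemidef.sqrt * (hA j).sqrt)‖ ^ 2 : ℝ) : ℂ) := by
  set R := hρ.posSemidef.sqrt with hRdef
  set Q := (hA j).sqrt with hQdef
  have hR : Rᴴ = R := hρ.posSemidef.posSemidef_sqrt.1
  have hQ : Qᴴ = Q := (hA j).posSemidef_sqrt.1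
  have h1 : ρ * A j = R * R * (Q * Q) := by
    rw [hρ.posSemidef.sqrt_mul_self, (hA j).sqrt_mul_self]
  rw [h1, ← trace_emb_self (R * Q), conjTranspose_mul, hR, hQ,
    show R * R * (Q * Q) = (R * R * Q) * Q by noncomm_ring, Matrix.trace_mul_comm,
    show Q * (R * R * Q) = Q * R * (R * Q) by noncomm_ring]

lemma pvec_eq (hρ : ρ.PosDef) (hA : ∀ j, (A j).PosSemidef) (j : Fin m) :
    pvec ρ A j = ‖emb (hρ.posSemidef.sqrt * (hA j).sqrt)‖ ^ 2 := by
  rw [pvec, trace_rho_emb hρ hA j, Complex.ofReal_re]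

lemma trace_rho_eq (hρ : ρ.PosDef) (hA : ∀ j, (A j).PosSemidef) (j : Fin m) :
    (ρ * A j).trace = ((pvec ρ A j : ℝ) : ℂ) := by
  rw [trace_rho_emb hρ hA j, pvec_eq hρ hA j]

lemma pvec_pos (hρ : ρ.PosDef) (hA : ∀ j, (A j).PosSemidef) (hA0 : ∀ j, A j ≠ 0)
    (j : Fin m) : 0 < pvec ρ A j := by
  rw [pvec_eq hρ hA j]
  have hne : hρ.posSemidef.sqrt * (hA j).sqrt ≠ 0 := by
    intro h
    have hdet : IsUnit (hρ.posSemidef.sqrt).det := by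
      have h2 : hρ.posSemidef.sqrt * hρ.posSemidef.sqrt = ρ := hρ.posSemidef.sqrt_mul_self
      have h3 : IsUnit ρ.det := isUnit_iff_ne_zero.2 (ne_of_gt hρ.det_pos)
      rw [← h2, Matrix.det_mul] at h3
      exact (IsUnit.mul_iff.1 h3).1
    have hQ0 : (hA j).sqrt = 0 := by
      calc (hA j).sqrt = (hρ.posSemidef.sqrt⁻¹ * hρ.posSemidef.sqrt) * (hA j).sqrt := by
            rw [Matrix.nonsing_inv_mul _ hdet, one_mul]
        _ = hρ.posSemidef.sqrt⁻¹ * (hρ.posSemidef.sqrt * (hA j).sqrt) := by rw [Matrix.mul_assoc]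
        _ = 0 := by rw [h, mul_zero]
    exact hA0 j (by rw [← (hA j).sqrt_mul_self, hQ0, mul_zero])
  have : emb (hρ.posSemidef.sqrt * (hA j).sqrt) ≠ 0 := fun h => hne (emb_eq_zero h)
  exact pow_pos (norm_pos_iff.2 this) 2

end ctx
section ctx2
variable {d m : ℕ} {ρ : Matrix (Fin d) (Fin d) ℂ} {A : Fin m → Matrix (Fin d) (Fin d) ℂ}

lemma trace_RA (hρ : ρ.PosDef) (hA : ∀ j, (A j).PosSemidef) (j k : Fin m) :
    ((hρ.posSemidef.sqrt * A j) * (A k * hρ.posSemidef.sqrt)).trace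
      = (ρ * (A j * A k)).trace := by
  set R := hρ.posSemidef.sqrt with hRdef
  rw [Matrix.trace_mul_comm,
    show (A k * R) * (R * A j) = A k * (R * R) * A j by noncomm_ring,
    hρ.posSemidef.sqrt_mul_self, Matrix.trace_mul_comm,
    show A j * (A k * ρ) = (A j * A k) * ρ by noncomm_ring, Matrix.trace_mul_comm]

lemma trace_Y (hρ : ρ.PosDef) (hA : ∀ j, (A j).PosSemidef) (u : Fin m → ℂ) :
    ((∑ j, u j • (A j * hρ.posSemidef.sqrt))ᴴ * (∑ k, u k • (A k * hρ.posSemidef.sqrt))).trace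
      = ∑ j, ∑ k, (starRingEnd ℂ) (u j) * u k * (ρ * (A j * A k)).trace := by
  set R := hρ.posSemidef.sqrt with hRdef
  have hR : Rᴴ = R := hρ.posSemidef.posSemidef_sqrt.1
  rw [conjTranspose_sum, Finset.sum_mul]
  rw [Matrix.trace_sum]
  refine Finset.sum_congr rfl fun j _ => ?_
  rw [Finset.mul_sum, Matrix.trace_sum]
  refine Finset.sum_congr rfl fun k _ => ?_
  rw [conjTranspose_smul, conjTranspose_mul, hR, (hA j).1]
  rw [smul_mul_assoc, mul_smul_comm, Matrix.trace_smul, Matrix.trace_smul,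
    trace_RA hρ hA j k, smul_eq_mul, smul_eq_mul, ← starRingEnd_apply, mul_assoc]

end ctx2
section ctx3
variable {d m : ℕ} {ρ : Matrix (Fin d) (Fin d) ℂ} {A : Fin m → Matrix (Fin d) (Fin d) ℂ}

lemma pvec_nonneg (hρ : ρ.PosDef) (hA : ∀ j, (A j).PosSemidef) (j : Fin m) :
    0 ≤ pvec ρ A j := by
  rw [pvec_eq hρ hA j]; positivity

lemma key_bound (hρ : ρ.PosDef) (hA : IsPOVM A) (u : Fin m → ℂ) :
    (((∑ j, u j • (A j * hρ.posSemidef.sqrt))ᴴ *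
      (∑ j, u j • (A j * hρ.posSemidef.sqrt))).trace).re
      ≤ ∑ j, ‖u j‖ ^ 2 * pvec ρ A j := by
  set R := hρ.posSemidef.sqrt with hRdef
  have hR : Rᴴ = R := hρ.posSemidef.posSemidef_sqrt.1
  set Y := ∑ j, u j • (A j * R) with hYdef
  set Q : Fin m → Matrix (Fin d) (Fin d) ℂ := fun j => (hA.1 j).sqrt with hQdef
  have hQh : ∀ j, (Q j)ᴴ = Q j := fun j => (hA.1 j).posSemidef_sqrt.1
  have hQQ : ∀ j, Q j * Q j = A j := fun j => (hA.1 j).sqrt_mul_self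
  set t : ℝ := ‖emb Y‖ ^ 2 with htdef
  set S : ℝ := ∑ j, ‖u j‖ ^ 2 * pvec ρ A j with hSdef
  have htr : (Yᴴ * Y).trace = (t : ℂ) := trace_emb_self Y
  -- step 1 : expand the right factor
  have step1 : (Yᴴ * Y).trace
      = ∑ j, u j * (inner ℂ (emb (R * Q j)) (emb (Yᴴ * Q j)) : ℂ) := by
    conv_lhs => rw [hYdef, Finset.mul_sum]
    rw [Matrix.trace_sum]
    refine Finset.sum_congr rfl fun j _ => ?_
    rw [mul_smul_comm, Matrix.trace_smul, smul_eq_mul, ← trace_emb]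
    congr 1
    rw [← hQQ j, conjTranspose_mul, hQh, hR,
      show Yᴴ * (Q j * Q j * R) = (Yᴴ * Q j) * (Q j * R) by noncomm_ring,
      Matrix.trace_mul_comm]
  have hnorm_RQ : ∀ j, ‖emb (R * Q j)‖ = Real.sqrt (pvec ρ A j) := fun j => by
    rw [pvec_eq hρ hA.1 j, Real.sqrt_sq (norm_nonneg _)]
  -- step 4 : sum of squares equals t
  have step4 : ∑ j, ‖emb (Yᴴ * Q j)‖ ^ 2 = t := by
    have h1 : ∀ j, ((Yᴴ * Q j)ᴴ * (Yᴴ * Q j)).trace = (Yᴴ * (A j * Y)).trace := fun j => by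
      rw [conjTranspose_mul, conjTranspose_conjTranspose, hQh, Matrix.trace_mul_comm,
        ← hQQ j, show (Yᴴ * Q j) * (Q j * Y) = Yᴴ * (Q j * Q j * Y) by noncomm_ring]
    have h2 : (∑ j, ((Yᴴ * Q j)ᴴ * (Yᴴ * Q j)).trace) = (t : ℂ) := by
      rw [Finset.sum_congr rfl fun j _ => h1 j, ← Matrix.trace_sum, ← Finset.mul_sum,
        show (∑ j, A j * Y) = (∑ j, A j) * Y from (Finset.sum_mul _ _ _).symm, hA.2,
        one_mul, htr]
    have h3 : (∑ j, ((‖emb (Yᴴ * Q j)‖ ^ 2 : ℝ) : ℂ)) = (t : ℂ) := by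
      rw [← h2]; exact Finset.sum_congr rfl fun j _ => (trace_emb_self _).symm
    exact_mod_cast h3
  have hts : t ≤ Real.sqrt S * Real.sqrt t := by
    calc t = ((Yᴴ * Y).trace).re := by rw [htr, Complex.ofReal_re]
      _ = (∑ j, u j * (inner ℂ (emb (R * Q j)) (emb (Yᴴ * Q j)) : ℂ)).re := by rw [step1]
      _ ≤ ‖∑ j, u j * (inner ℂ (emb (R * Q j)) (emb (Yᴴ * Q j)) : ℂ)‖ := Complex.re_le_norm _
      _ ≤ ∑ j, ‖u j * (inner ℂ (emb (R * Q j)) (emb (Yᴴ * Q j)) : ℂ)‖ :=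
          norm_sum_le _ _
      _ ≤ ∑ j, (‖u j‖ * Real.sqrt (pvec ρ A j)) * ‖emb (Yᴴ * Q j)‖ := by
          refine Finset.sum_le_sum fun j _ => ?_
          rw [norm_mul, mul_assoc, ← hnorm_RQ j]
          exact mul_le_mul_of_nonneg_left (norm_inner_le_norm _ _) (norm_nonneg _)
      _ ≤ Real.sqrt (∑ j, ((‖u j‖ * Real.sqrt (pvec ρ A j)) ^ 2)) *
          Real.sqrt (∑ j, ‖emb (Yᴴ * Q j)‖ ^ 2) :=
          Real.sum_mul_le_sqrt_mul_sqrt _ _ _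
      _ = Real.sqrt S * Real.sqrt t := by
          rw [step4, hSdef]
          congr 2
          refine Finset.sum_congr rfl fun j _ => ?_
          rw [mul_pow, Real.sq_sqrt (pvec_nonneg hρ hA.1 j)]
  have hS0 : 0 ≤ S := Finset.sum_nonneg fun j _ => by
    have := pvec_nonneg hρ hA.1 j; positivity
  have ht0 : 0 ≤ t := by positivity
  have goal : t ≤ S := by
    nlinarith [sq_nonneg (Real.sqrt S - Real.sqrt t), Real.sq_sqrt hS0, Real.sq_sqrt ht0,
      Real.sqrt_nonneg S, Real.sqrt_nonneg t]
  calc ((Yᴴ * Y).trace).re = t := by rw [htr, Complex.ofReal_re]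
    _ ≤ S := goal

end ctx3


section ctx4
variable {d m : ℕ} {ρ : Matrix (Fin d) (Fin d) ℂ} {A : Fin m → Matrix (Fin d) (Fin d) ℂ}

lemma norm_u_sq (hρ : ρ.PosDef) (hA : IsPOVM A) (hA0 : ∀ j, A j ≠ 0) (c : Fin m → ℂ)
    (j : Fin m) : ‖c j * ((Real.sqrt (pvec ρ A j) : ℝ) : ℂ)⁻¹‖ ^ 2 * pvec ρ A j
      = ‖c j‖ ^ 2 := by
  have hp := pvec_pos hρ hA.1 hA0 j
  rw [norm_mul, norm_inv, Complex.norm_real, Real.norm_eq_abs,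
    abs_of_nonneg (Real.sqrt_nonneg _), mul_pow, inv_pow, Real.sq_sqrt hp.le]
  field_simp

lemma qf_R (hρ : ρ.PosDef) (hA : IsPOVM A) (hA0 : ∀ j, A j ≠ 0) (c : Fin m → ℂ) :
    ∃ t : ℝ, star c ⬝ᵥ (GmR ρ A *ᵥ c) = (t : ℂ) ∧ 0 ≤ t ∧ t ≤ ∑ j, ‖c j‖ ^ 2 := by
  set u : Fin m → ℂ := fun j => c j * ((Real.sqrt (pvec ρ A j) : ℝ) : ℂ)⁻¹ with hu
  set Y := ∑ j, u j • (A j * hρ.posSemidef.sqrt) with hY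
  refine ⟨‖emb Y‖ ^ 2, ?_, by positivity, ?_⟩
  · rw [← trace_emb_self Y, hY, trace_Y hρ hA.1 u]
    simp only [dotProduct, Matrix.mulVec, GmR, Matrix.of_apply, Pi.star_apply,
      Finset.mul_sum]
    refine Finset.sum_congr rfl fun j _ => Finset.sum_congr rfl fun k _ => ?_
    simp only [hu, Complex.star_def, _root_.map_mul, map_inv₀, Complex.conj_conj,
      Complex.conj_ofReal]
    rw [Real.sqrt_mul (pvec_nonneg hρ hA.1 j), Complex.ofReal_mul, div_eq_mul_inv, mul_inv]
    ring
  · have hb := key_bound hρ hA u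
    rw [← hY, trace_emb_self Y, Complex.ofReal_re] at hb
    calc ‖emb Y‖ ^ 2 ≤ ∑ j, ‖u j‖ ^ 2 * pvec ρ A j := hb
      _ = ∑ j, ‖c j‖ ^ 2 := Finset.sum_congr rfl fun j _ => norm_u_sq hρ hA hA0 c j

lemma qf_L (hρ : ρ.PosDef) (hA : IsPOVM A) (hA0 : ∀ j, A j ≠ 0) (c : Fin m → ℂ) :
    ∃ t : ℝ, star c ⬝ᵥ (GmL ρ A *ᵥ c) = (t : ℂ) ∧ 0 ≤ t ∧ t ≤ ∑ j, ‖c j‖ ^ 2 := by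
  set u : Fin m → ℂ := fun j => (starRingEnd ℂ) (c j) * ((Real.sqrt (pvec ρ A j) : ℝ) : ℂ)⁻¹
    with hu
  set Y := ∑ j, u j • (A j * hρ.posSemidef.sqrt) with hY
  refine ⟨‖emb Y‖ ^ 2, ?_, by positivity, ?_⟩
  · rw [← trace_emb_self Y, hY, trace_Y hρ hA.1 u]
    simp only [dotProduct, Matrix.mulVec, GmL, Matrix.of_apply, Pi.star_apply,
      Finset.mul_sum]
    rw [Finset.sum_comm]
    refine Finset.sum_congr rfl fun j _ => Finset.sum_congr rfl fun k _ => ?_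
    simp only [hu, Complex.star_def, _root_.map_mul, map_inv₀, Complex.conj_conj,
      Complex.conj_ofReal]
    rw [Real.sqrt_mul (pvec_nonneg hρ hA.1 k), Complex.ofReal_mul, div_eq_mul_inv, mul_inv]
    ring
  · have hb := key_bound hρ hA u
    rw [← hY, trace_emb_self Y, Complex.ofReal_re] at hb
    calc ‖emb Y‖ ^ 2 ≤ ∑ j, ‖u j‖ ^ 2 * pvec ρ A j := hb
      _ = ∑ j, ‖c j‖ ^ 2 := by
        refine Finset.sum_congr rfl fun j _ => ?_
        rw [show ‖u j‖ = ‖(starRingEnd ℂ) (c j) * ((Real.sqrt (pvec ρ A j) : ℝ) : ℂ)⁻¹‖ from rfl,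
          norm_mul, RCLike.norm_conj, ← norm_mul]
        exact norm_u_sq hρ hA hA0 c j

end ctx4


section ctx5
variable {d m : ℕ} {ρ : Matrix (Fin d) (Fin d) ℂ} {A : Fin m → Matrix (Fin d) (Fin d) ℂ}

lemma star_trace_rho (hρ : ρ.PosDef) (hA : ∀ j, (A j).PosSemidef) (j k : Fin m) :
    star ((ρ * (A j * A k)).trace) = (ρ * (A k * A j)).trace := by
  rw [← Matrix.trace_conjTranspose, conjTranspose_mul, conjTranspose_mul,
    (hA j).1, (hA k).1, hρ.1, Matrix.trace_mul_comm]

lemma herm_L (hρ : ρ.PosDef) (hA : ∀ j, (A j).PosSemidef) : (GmL ρ A).IsHermitian := by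
  apply Matrix.ext
  intro j k
  simp only [conjTranspose_apply, GmL, Matrix.of_apply]
  rw [star_div₀, star_trace_rho hρ hA, mul_comm (pvec ρ A k)]
  congr 1
  rw [Complex.star_def, Complex.conj_ofReal]

lemma herm_R (hρ : ρ.PosDef) (hA : ∀ j, (A j).PosSemidef) : (GmR ρ A).IsHermitian := by
  apply Matrix.ext
  intro j k
  simp only [conjTranspose_apply, GmR, Matrix.of_apply]
  rw [star_div₀, star_trace_rho hρ hA, mul_comm (pvec ρ A k)]
  congr 1
  rw [Complex.star_def, Complex.conj_ofReal]

lemma GmS_eq : GmS ρ A = (2⁻¹ : ℂ) • (GmL ρ A + GmR ρ A) := by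
  apply Matrix.ext
  intro j k
  simp only [GmS, GmL, GmR, Matrix.of_apply, Matrix.smul_apply, Matrix.add_apply, smul_eq_mul]
  ring

lemma herm_S (hρ : ρ.PosDef) (hA : ∀ j, (A j).PosSemidef) : (GmS ρ A).IsHermitian := by
  rw [GmS_eq]
  have h1 := (herm_L hρ hA).add (herm_R hρ hA)
  rw [Matrix.IsHermitian, conjTranspose_smul, h1]
  norm_num

lemma qf_S (hρ : ρ.PosDef) (hA : IsPOVM A) (hA0 : ∀ j, A j ≠ 0) (c : Fin m → ℂ) :
    ∃ t : ℝ, star c ⬝ᵥ (GmS ρ A *ᵥ c) = (t : ℂ) ∧ 0 ≤ t ∧ t ≤ ∑ j, ‖c j‖ ^ 2 := by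
  obtain ⟨t1, h1, h10, h11⟩ := qf_L hρ hA hA0 c
  obtain ⟨t2, h2, h20, h21⟩ := qf_R hρ hA hA0 c
  refine ⟨(t1 + t2) / 2, ?_, by positivity, by linarith⟩
  rw [GmS_eq, Matrix.smul_mulVec, Matrix.add_mulVec, dotProduct_smul,
    dotProduct_add, h1, h2, smul_eq_mul]
  push_cast
  ring

-- sum of traces
lemma sum_trace_left (hρ : ρ.PosDef) (hA : IsPOVM A) (j : Fin m) :
    ∑ k, (ρ * (A k * A j)).trace = ((pvec ρ A j : ℝ) : ℂ) := by
  rw [← Matrix.trace_sum, ← Finset.mul_sum,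
    show (∑ k, A k * A j) = (∑ k, A k) * A j from (Finset.sum_mul _ _ _).symm, hA.2, one_mul,
    trace_rho_eq hρ hA.1 j]

lemma sum_trace_right (hρ : ρ.PosDef) (hA : IsPOVM A) (j : Fin m) :
    ∑ k, (ρ * (A j * A k)).trace = ((pvec ρ A j : ℝ) : ℂ) := by
  rw [← Matrix.trace_sum, ← Finset.mul_sum,
    show (∑ k, A j * A k) = A j * (∑ k, A k) from (Finset.mul_sum _ _ _).symm, hA.2, mul_one,
    trace_rho_eq hρ hA.1 j]

lemma mulVec_L (hρ : ρ.PosDef) (hA : IsPOVM A) (hA0 : ∀ j, A j ≠ 0) :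
    GmL ρ A *ᵥ sqrtp ρ A = sqrtp ρ A := by
  funext j
  have hp : ∀ k, 0 < pvec ρ A k := pvec_pos hρ hA.1 hA0
  have hstep : ∀ k, GmL ρ A j k * sqrtp ρ A k
      = (ρ * (A k * A j)).trace * ((Real.sqrt (pvec ρ A j) : ℝ) : ℂ)⁻¹ := by
    intro k
    have hk : ((Real.sqrt (pvec ρ A k) : ℝ) : ℂ) ≠ 0 := by
      exact_mod_cast (Real.sqrt_pos.2 (hp k)).ne'
    simp only [GmL, Matrix.of_apply, sqrtp]
    rw [Real.sqrt_mul (hp j).le, Complex.ofReal_mul, div_mul_eq_mul_div,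
      mul_div_mul_right _ _ hk, div_eq_mul_inv]
  show ∑ k, GmL ρ A j k * sqrtp ρ A k = sqrtp ρ A j
  rw [Finset.sum_congr rfl fun k _ => hstep k, ← Finset.sum_mul, sum_trace_left hρ hA j]
  rw [show (pvec ρ A j : ℝ) = Real.sqrt (pvec ρ A j) * Real.sqrt (pvec ρ A j) from
    (Real.mul_self_sqrt (hp j).le).symm]
  have hj : ((Real.sqrt (pvec ρ A j) : ℝ) : ℂ) ≠ 0 := by
    exact_mod_cast (Real.sqrt_pos.2 (hp j)).ne'
  push_cast
  field_simp [sqrtp]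
  rw [Real.sqrt_sq (Real.sqrt_nonneg _), pow_two, mul_div_assoc, div_self hj, mul_one, sqrtp]

lemma mulVec_R (hρ : ρ.PosDef) (hA : IsPOVM A) (hA0 : ∀ j, A j ≠ 0) :
    GmR ρ A *ᵥ sqrtp ρ A = sqrtp ρ A := by
  funext j
  have hp : ∀ k, 0 < pvec ρ A k := pvec_pos hρ hA.1 hA0
  have hstep : ∀ k, GmR ρ A j k * sqrtp ρ A k
      = (ρ * (A j * A k)).trace * ((Real.sqrt (pvec ρ A j) : ℝ) : ℂ)⁻¹ := by
    intro k
    have hk : ((Real.sqrt (pvec ρ A k) : ℝ) : ℂ) ≠ 0 := by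
      exact_mod_cast (Real.sqrt_pos.2 (hp k)).ne'
    simp only [GmR, Matrix.of_apply, sqrtp]
    rw [Real.sqrt_mul (hp j).le, Complex.ofReal_mul, div_mul_eq_mul_div,
      mul_div_mul_right _ _ hk, div_eq_mul_inv]
  show ∑ k, GmR ρ A j k * sqrtp ρ A k = sqrtp ρ A j
  rw [Finset.sum_congr rfl fun k _ => hstep k, ← Finset.sum_mul, sum_trace_right hρ hA j]
  rw [show (pvec ρ A j : ℝ) = Real.sqrt (pvec ρ A j) * Real.sqrt (pvec ρ A j) from
    (Real.mul_self_sqrt (hp j).le).symm]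
  have hj : ((Real.sqrt (pvec ρ A j) : ℝ) : ℂ) ≠ 0 := by
    exact_mod_cast (Real.sqrt_pos.2 (hp j)).ne'
  push_cast
  field_simp [sqrtp]
  rw [Real.sqrt_sq (Real.sqrt_nonneg _), pow_two, mul_div_assoc, div_self hj, mul_one, sqrtp]

lemma mulVec_S (hρ : ρ.PosDef) (hA : IsPOVM A) (hA0 : ∀ j, A j ≠ 0) :
    GmS ρ A *ᵥ sqrtp ρ A = sqrtp ρ A := by
  rw [GmS_eq, Matrix.smul_mulVec, Matrix.add_mulVec, mulVec_L hρ hA hA0,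
    mulVec_R hρ hA hA0]
  funext j
  simp only [Pi.smul_apply, Pi.add_apply, smul_eq_mul]
  ring

end ctx5
section fin
variable {n : ℕ}

lemma star_dot_self (c : Fin n → ℂ) : star c ⬝ᵥ c = ((∑ j, ‖c j‖ ^ 2 : ℝ) : ℂ) := by
  push_cast
  simp only [dotProduct, Pi.star_apply]
  refine Finset.sum_congr rfl fun j _ => ?_
  rw [Complex.star_def]
  exact_mod_cast RCLike.conj_mul (c j)

lemma toCLM_isPositive {M : Matrix (Fin n) (Fin n) ℂ} (hM : M.PosSemidef) :
    (Matrix.toEuclideanCLM (𝕜 := ℂ) M).IsPositive := by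
  constructor
  · refine ContinuousLinearMap.isSelfAdjoint_iff_isSymmetric.1 ?_
    rw [_root_.IsSelfAdjoint, ← map_star]
    congr 1
    exact hM.1
  · intro x
    rw [ContinuousLinearMap.reApplyInnerSelf_apply, ← inner_conj_symm, RCLike.conj_re]
    have h1 : (inner (𝕜 := ℂ) x (Matrix.toEuclideanCLM (𝕜 := ℂ) M x))
        = star (WithLp.equiv 2 _ x) ⬝ᵥ (M *ᵥ WithLp.equiv 2 _ x) := by
      rw [EuclideanSpace.inner_eq_star_dotProduct, Matrix.ofLp_toEuclideanCLM]
      exact dotProduct_comm _ _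
    rw [h1]
    exact hM.re_dotProduct_nonneg _

lemma finisher {G : Matrix (Fin n) (Fin n) ℂ} (hherm : G.IsHermitian)
    (hqf : ∀ c : Fin n → ℂ, ∃ t : ℝ, star c ⬝ᵥ (G *ᵥ c) = (t : ℂ) ∧ 0 ≤ t ∧
      t ≤ ∑ j, ‖c j‖ ^ 2)
    {v : Fin n → ℂ} (hv : v ≠ 0) (hGv : G *ᵥ v = v) :
    (∀ (h : G.IsHermitian) (i : Fin n), 0 ≤ h.eigenvalues i ∧ h.eigenvalues i ≤ 1) ∧
      ‖Matrix.toEuclideanCLM (𝕜 := ℂ) G‖ = 1 := by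
  have psd : G.PosSemidef := by
    refine .of_dotProduct_mulVec_nonneg hherm fun c => ?_
    obtain ⟨t, ht, ht0, _⟩ := hqf c
    rw [ht]
    exact_mod_cast ht0
  have psd' : (1 - G).PosSemidef := by
    refine .of_dotProduct_mulVec_nonneg (Matrix.isHermitian_one.sub hherm) fun c => ?_
    obtain ⟨t, ht, _, ht1⟩ := hqf c
    rw [Matrix.sub_mulVec, Matrix.one_mulVec, dotProduct_sub, ht, star_dot_self c,
      show ((∑ j, ‖c j‖ ^ 2 : ℝ) : ℂ) - (t : ℂ) = (((∑ j, ‖c j‖ ^ 2) - t : ℝ) : ℂ) by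
        push_cast; ring]
    exact_mod_cast sub_nonneg.2 ht1
  constructor
  · intro h i
    refine ⟨psd.eigenvalues_nonneg i, ?_⟩
    have hv2 := psd'.re_dotProduct_nonneg ⇑(h.eigenvectorBasis i)
    have hb1 : (star ⇑(h.eigenvectorBasis i)) ⬝ᵥ ⇑(h.eigenvectorBasis i) = 1 := by
      have h2 := inner_self_eq_norm_sq_to_K (𝕜 := ℂ) (h.eigenvectorBasis i)
      rw [EuclideanSpace.inner_eq_star_dotProduct] at h2
      rw [dotProduct_comm, h2, h.eigenvectorBasis.orthonormal.1 i]
      norm_num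
    rw [Matrix.sub_mulVec, Matrix.one_mulVec, dotProduct_sub,
      h.mulVec_eigenvectorBasis i, dotProduct_smul, hb1, map_sub] at hv2
    simp only [RCLike.smul_re, RCLike.one_re, mul_one] at hv2
    linarith
  · set T := Matrix.toEuclideanCLM (𝕜 := ℂ) G with hT
    have hTpos : (0 : _) ≤ T := (ContinuousLinearMap.nonneg_iff_isPositive T).2
      (toCLM_isPositive psd)
    have hle : T ≤ 1 := by
      rw [ContinuousLinearMap.le_def]
      have h1 : (1 : EuclideanSpace ℂ (Fin n) →L[ℂ] EuclideanSpace ℂ (Fin n)) - T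
          = Matrix.toEuclideanCLM (𝕜 := ℂ) (1 - G) := by rw [map_sub, _root_.map_one]
      rw [h1]
      exact toCLM_isPositive psd'
    have hn1 : ‖T‖ ≤ 1 := (CStarAlgebra.norm_le_one_iff_of_nonneg T hTpos).2 hle
    set w : EuclideanSpace ℂ (Fin n) := (WithLp.equiv 2 _).symm v with hw
    have hTw : T w = w := by
      rw [hw, hT, WithLp.equiv_symm_apply, Matrix.toEuclideanCLM_toLp]
      simp only [Matrix.toLin'_apply, hGv]
    have hwne : w ≠ 0 := by
      intro h0
      apply hv
      have h1 := congrArg (WithLp.equiv 2 (Fin n → ℂ)) h0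
      exact h1
    have hwpos : 0 < ‖w‖ := norm_pos_iff.2 hwne
    have hge : 1 ≤ ‖T‖ := by
      have h3 := T.le_opNorm w
      rw [hTw] at h3
      nlinarith
    linarith

end fin

/-- Every eigenvalue of `G_S`, `G_L`, `G_R` lies in `[0,1]`; `√p` is a common
eigenvector with eigenvalue `1`; so each matrix has operator norm exactly `1`. -/
theorem stmt_10 {d m : ℕ}
    (ρ : Matrix (Fin d) (Fin d) ℂ) (hρ : ρ.PosDef) (hρtr : ρ.trace = 1)
    (A : Fin m → Matrix (Fin d) (Fin d) ℂ)
    (hA : IsPOVM A) (hA0 : ∀ j, A j ≠ 0) :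
    (∀ (hS : (GmS ρ A).IsHermitian) (i : Fin m),
      0 ≤ hS.eigenvalues i ∧ hS.eigenvalues i ≤ 1) ∧
    (∀ (hL : (GmL ρ A).IsHermitian) (i : Fin m),
      0 ≤ hL.eigenvalues i ∧ hL.eigenvalues i ≤ 1) ∧
    (∀ (hR : (GmR ρ A).IsHermitian) (i : Fin m),
      0 ≤ hR.eigenvalues i ∧ hR.eigenvalues i ≤ 1) ∧
    sqrtp ρ A ≠ 0 ∧
    (GmS ρ A).mulVec (sqrtp ρ A) = sqrtp ρ A ∧
    (GmL ρ A).mulVec (sqrtp ρ A) = sqrtp ρ A ∧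
    (GmR ρ A).mulVec (sqrtp ρ A) = sqrtp ρ A ∧
    ‖Matrix.toEuclideanCLM (𝕜 := ℂ) (GmS ρ A)‖ = 1 ∧
    ‖Matrix.toEuclideanCLM (𝕜 := ℂ) (GmL ρ A)‖ = 1 ∧
    ‖Matrix.toEuclideanCLM (𝕜 := ℂ) (GmR ρ A)‖ = 1 := by
  have hd : 0 < d := by
    rcases Nat.eq_zero_or_pos d with hd | hd
    · subst hd
      have h0 : ρ.trace = 0 := by
        rw [Matrix.trace]
        exact Finset.sum_of_isEmpty _
      rw [h0] at hρtr
      exact absurd hρtr.symm one_ne_zero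
    · exact hd
  have hm : 0 < m := by
    rcases Nat.eq_zero_or_pos m with hm | hm
    · exfalso
      subst hm
      have h1 := hA.2
      simp only [Finset.univ_eq_empty, Finset.sum_empty] at h1
      have h2 := congrFun (congrFun h1 ⟨0, hd⟩) ⟨0, hd⟩
      simp [Matrix.one_apply_eq] at h2
    · exact hm
  have hsq : sqrtp ρ A ≠ 0 := by
    intro h0
    have hj := congrFun h0 ⟨0, hm⟩
    have hp := pvec_pos hρ hA.1 hA0 ⟨0, hm⟩
    rw [sqrtp] at hj
    simp only [Pi.zero_apply, Complex.ofReal_eq_zero] at hj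
    exact (Real.sqrt_pos.2 hp).ne' hj
  obtain ⟨eigS, normS⟩ := finisher (herm_S hρ hA.1) (qf_S hρ hA hA0) hsq (mulVec_S hρ hA hA0)
  obtain ⟨eigL, normL⟩ := finisher (herm_L hρ hA.1) (qf_L hρ hA hA0) hsq (mulVec_L hρ hA hA0)
  obtain ⟨eigR, normR⟩ := finisher (herm_R hρ hA.1) (qf_R hρ hA hA0) hsq (mulVec_R hρ hA hA0)
  exact ⟨eigS, eigL, eigR, hsq, mulVec_S hρ hA hA0, mulVec_L hρ hA hA0, mulVec_R hρ hA hA0,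
    normS, normL, normR⟩
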